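/- For $\nu > 1$ and a nonnegative integer $k$, the function $\phi(z) = \sin(z)\cos^\nu(z)\, {}_2F_1(-k, \nu+k+1; \nu+\tfrac12; \cos^2 z)$ satisfies $-\phi''(z) + \nu(\nu-1)\tan^2(z)\,\phi(z) = \epsilon\,\phi(z)$ on $(-\pi/2, \pi/2)$ with $\epsilon = (2k+1)(2\nu+2k+1)+\nu$, and $\phi(\pm\pi/2)=0$. -/

import Mathlib

/-- Terminating hypergeometric polynomial ₂F₁(-k, b; c; x). -/
noncomputable def hyp2F1term (k : ℕ) (b c x : ℝ) : ℝ :=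
  ∑ j ∈ Finset.range (k + 1),
    ((ascPochhammer ℝ j).eval (-(k : ℝ)) * (ascPochhammer ℝ j).eval b /
      ((ascPochhammer ℝ j).eval c * (Nat.factorial j))) * x ^ j

/-!
Expand `φ = ∑ⱼ aⱼ sin z cos^(ν+2j) z`. Each mode `g_μ = sin · cos^μ` satisfies
`g_μ'' = μ(μ-1) g_{μ-2} - (μ+1)² g_μ` and `tan² · g_μ = g_{μ-2} - g_μ`, so the operator
`-d²/dz² + ν(ν-1) tan² - ε` maps `g_{ν+2j}` into the span of `g_{ν+2j-2}` and `g_{ν+2j}`.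
The resulting sum telescopes: the `g_{ν-2}` coefficient vanishes for `j = 0`, the `g_{ν+2k}`
coefficient vanishes exactly for the given `ε`, and the middle coefficients cancel by the
two-term recurrence of the hypergeometric coefficients.
-/

open Real Finset Filter Topology

noncomputable def hyp2F1Coeff (k : ℕ) (b c : ℝ) (j : ℕ) : ℝ :=
  (ascPochhammer ℝ j).eval (-(k : ℝ)) * (ascPochhammer ℝ j).eval b /
    ((ascPochhammer ℝ j).eval c * (Nat.factorial j))

lemma hyp2F1term_eq_sum (k : ℕ) (b c x : ℝ) :
    hyp2F1term k b c x = ∑ j ∈ range (k + 1), hyp2F1Coeff k b c j * x ^ j := rfl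

lemma hyp2F1Coeff_succ_mul (k : ℕ) (b c : ℝ) (j : ℕ)
    (hc : (ascPochhammer ℝ (j + 1)).eval c ≠ 0) :
    hyp2F1Coeff k b c (j + 1) * ((c + j) * (j + 1)) =
      hyp2F1Coeff k b c j * ((-k + j) * (b + j)) := by
  rw [ascPochhammer_succ_eval] at hc
  obtain ⟨hcj, hcj'⟩ := mul_ne_zero_iff.mp hc
  simp only [hyp2F1Coeff, ascPochhammer_succ_eval, Nat.factorial_succ, Nat.cast_mul,
    Nat.cast_succ]
  field_simp

lemma sum_range_succ_mul_add_mul_eq_zero {R : Type*} [NonUnitalNonAssocSemiring R]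
    {P Q u f : ℕ → R} {n : ℕ} (hP : P 0 = 0) (hQ : Q n = 0)
    (hPQ : ∀ j < n, P (j + 1) + Q j = 0) (hu : ∀ j, u (j + 1) = f j) :
    ∑ j ∈ range (n + 1), (P j * u j + Q j * f j) = 0 := by
  rw [sum_add_distrib, sum_range_succ', sum_range_succ, hP, hQ, zero_mul, zero_mul, add_zero,
    add_zero, ← sum_add_distrib]
  refine sum_eq_zero fun j hj => ?_
  rw [hu, ← add_mul, hPQ j (mem_range.mp hj), zero_mul]

lemma iteratedDeriv_two_eq_of_hasDerivAt {𝕜 F : Type*} [NontriviallyNormedField 𝕜]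
    [NormedAddCommGroup F] [NormedSpace 𝕜 F] {f f' : 𝕜 → F} {f'' : F} {x : 𝕜}
    (hf : ∀ᶠ y in 𝓝 x, HasDerivAt f (f' y) y) (hf' : HasDerivAt f' f'' x) :
    iteratedDeriv 2 f x = f'' := by
  have hderiv : deriv f =ᶠ[𝓝 x] f' := hf.mono fun y hy => hy.deriv
  rw [iteratedDeriv_succ, iteratedDeriv_one, hderiv.deriv_eq, hf'.deriv]

noncomputable def sinMulCosRpow (μ z : ℝ) : ℝ := sin z * cos z ^ μ

section sinMulCosRpow

variable {μ z : ℝ}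

lemma hasDerivAt_cos_rpow (hz : cos z ≠ 0) :
    HasDerivAt (fun w => cos w ^ μ) (-μ * sinMulCosRpow (μ - 1) z) z := by
  refine ((hasDerivAt_cos z).rpow_const (Or.inl hz)).congr_deriv ?_
  rw [sinMulCosRpow]
  ring

lemma hasDerivAt_sinMulCosRpow (hz : cos z ≠ 0) :
    HasDerivAt (sinMulCosRpow μ) ((μ + 1) * cos z ^ (μ + 1) - μ * cos z ^ (μ - 1)) z := by
  refine ((hasDerivAt_sin z).mul (hasDerivAt_cos_rpow hz)).congr_deriv ?_
  have hμ1 : cos z ^ (μ + 1) = cos z ^ (μ - 1) * cos z ^ 2 := by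
    rw [← rpow_add_natCast hz]
    push_cast
    ring_nf
  have hμ : cos z ^ (μ + 1) = cos z ^ μ * cos z := rpow_add_one hz μ
  rw [sinMulCosRpow]
  linear_combination -hμ - μ * hμ1 - μ * cos z ^ (μ - 1) * sin_sq_add_cos_sq z

lemma hasDerivAt_deriv_sinMulCosRpow (hz : cos z ≠ 0) :
    HasDerivAt (fun w => (μ + 1) * cos w ^ (μ + 1) - μ * cos w ^ (μ - 1))
      (μ * (μ - 1) * sinMulCosRpow (μ - 2) z - (μ + 1) ^ 2 * sinMulCosRpow μ z) z := by
  refine (((hasDerivAt_cos_rpow hz).const_mul (μ + 1)).sub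
    ((hasDerivAt_cos_rpow hz).const_mul μ)).congr_deriv ?_
  rw [show μ + 1 - 1 = μ by ring, show μ - 1 - 1 = μ - 2 by ring]
  ring

lemma tan_sq_mul_sinMulCosRpow (hz : cos z ≠ 0) :
    tan z ^ 2 * sinMulCosRpow μ z = sinMulCosRpow (μ - 2) z - sinMulCosRpow μ z := by
  have hμ : cos z ^ μ = cos z ^ (μ - 2) * cos z ^ 2 := by
    rw [← rpow_add_natCast hz]
    norm_num
  rw [sinMulCosRpow, sinMulCosRpow, hμ, tan_eq_sin_div_cos]
  field_simp
  linear_combination sin z * cos z ^ (μ - 2) * sin_sq_add_cos_sq z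

lemma iteratedDeriv_two_sum_sinMulCosRpow {ι : Type*} (s : Finset ι) (a μ : ι → ℝ)
    (hz : cos z ≠ 0) :
    iteratedDeriv 2 (fun w => ∑ i ∈ s, a i * sinMulCosRpow (μ i) w) z =
      ∑ i ∈ s, a i * (μ i * (μ i - 1) * sinMulCosRpow (μ i - 2) z -
        (μ i + 1) ^ 2 * sinMulCosRpow (μ i) z) := by
  refine iteratedDeriv_two_eq_of_hasDerivAt (f' := fun w => ∑ i ∈ s, a i *
      ((μ i + 1) * cos w ^ (μ i + 1) - μ i * cos w ^ (μ i - 1))) ?_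
    (HasDerivAt.fun_sum fun i _ => (hasDerivAt_deriv_sinMulCosRpow hz).const_mul (a i))
  filter_upwards [continuous_cos.continuousAt.eventually_ne hz] with w hw
  exact HasDerivAt.fun_sum fun i _ => (hasDerivAt_sinMulCosRpow hw).const_mul (a i)

end sinMulCosRpow

lemma sin_mul_cos_rpow_mul_hyp2F1term (k : ℕ) (ν b c : ℝ) {z : ℝ} (hz : cos z ≠ 0) :
    sin z * cos z ^ ν * hyp2F1term k b c (cos z ^ 2) =
      ∑ j ∈ range (k + 1), hyp2F1Coeff k b c j * sinMulCosRpow (ν + 2 * j) z := by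
  rw [hyp2F1term_eq_sum, mul_sum]
  refine sum_congr rfl fun j _ => ?_
  have hpow : cos z ^ (ν + 2 * j) = cos z ^ ν * (cos z ^ 2) ^ j := by
    rw [← pow_mul, ← rpow_add_natCast hz]
    push_cast
    ring_nf
  rw [sinMulCosRpow, hpow]
  ring

noncomputable def hyp2F1OddSeries (ν : ℝ) (k : ℕ) (z : ℝ) : ℝ :=
  ∑ j ∈ range (k + 1), hyp2F1Coeff k (ν + k + 1) (ν + 1 / 2) j * sinMulCosRpow (ν + 2 * j) z

theorem neg_iteratedDeriv_two_add_tan_sq_mul_hyp2F1OddSeries {ν : ℝ} (hν : 0 < ν + 1 / 2)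
    (k : ℕ) {z : ℝ} (hz : cos z ≠ 0) :
    -iteratedDeriv 2 (hyp2F1OddSeries ν k) z +
        ν * (ν - 1) * tan z ^ 2 * hyp2F1OddSeries ν k z =
      ((2 * k + 1) * (2 * ν + 2 * k + 1) + ν) * hyp2F1OddSeries ν k z := by
  set a := hyp2F1Coeff k (ν + k + 1) (ν + 1 / 2)
  set ε : ℝ := (2 * k + 1) * (2 * ν + 2 * k + 1) + ν
  set μ : ℕ → ℝ := fun j => ν + 2 * j with hμ
  set P : ℕ → ℝ := fun j => a j * (ν * (ν - 1) - μ j * (μ j - 1))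
  set Q : ℕ → ℝ := fun j => a j * ((μ j + 1) ^ 2 - ν * (ν - 1) - ε)
  have hterm (j : ℕ) : -(a j * (μ j * (μ j - 1) * sinMulCosRpow (μ j - 2) z -
        (μ j + 1) ^ 2 * sinMulCosRpow (μ j) z)) +
      ν * (ν - 1) * tan z ^ 2 * (a j * sinMulCosRpow (μ j) z) - ε * (a j * sinMulCosRpow (μ j) z)
      = P j * sinMulCosRpow (μ j - 2) z + Q j * sinMulCosRpow (μ j) z := by
    linear_combination ν * (ν - 1) * a j * tan_sq_mul_sinMulCosRpow (μ := μ j) hz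
  -- the middle coefficients are `-4` times the hypergeometric recurrence
  have hPQ : ∀ j < k, P (j + 1) + Q j = 0 := fun j _ => by
    have hrec := hyp2F1Coeff_succ_mul k (ν + k + 1) (ν + 1 / 2) j
      (ascPochhammer_pos _ _ hν).ne'
    simp only [P, Q, hμ, ε]
    push_cast
    linear_combination (-4) * hrec
  unfold hyp2F1OddSeries
  rw [← sub_eq_zero, iteratedDeriv_two_sum_sinMulCosRpow _ _ _ hz, mul_sum, mul_sum,
    ← sum_neg_distrib, ← sum_add_distrib, ← sum_sub_distrib, sum_congr rfl fun j _ => hterm j]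
  refine sum_range_succ_mul_add_mul_eq_zero (by simp [P, μ]) (by simp only [Q, ε, μ]; ring)
    hPQ fun j => ?_
  simp only [μ]
  push_cast
  ring_nf

theorem gup_oscillator_odd_eigenfunctions (ν : ℝ) (hν : 1 < ν) (k : ℕ) :
    let φ : ℝ → ℝ := fun z =>
      Real.sin z * Real.cos z ^ ν *
        hyp2F1term k (ν + k + 1) (ν + 1 / 2) (Real.cos z ^ 2)
    let ε : ℝ := (2 * k + 1) * (2 * ν + 2 * k + 1) + ν
    (∀ z ∈ Set.Ioo (-(Real.pi / 2)) (Real.pi / 2),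
      -(iteratedDeriv 2 φ z) + ν * (ν - 1) * Real.tan z ^ 2 * φ z = ε * φ z) ∧
    φ (Real.pi / 2) = 0 ∧ φ (-(Real.pi / 2)) = 0 := by
  intro φ ε
  have hφ_zero : ∀ z, cos z = 0 → φ z = 0 := fun z hz => by
    simp only [φ, hz, zero_rpow (by positivity : ν ≠ 0), mul_zero, zero_mul]
  refine ⟨fun z hz => ?_, hφ_zero _ cos_pi_div_two, hφ_zero _ (by simp)⟩
  have hcos : cos z ≠ 0 := (cos_pos_of_mem_Ioo hz).ne'
  have hφ : φ =ᶠ[𝓝 z] hyp2F1OddSeries ν k := by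
    filter_upwards [continuous_cos.continuousAt.eventually_ne hcos] with w hw
    exact sin_mul_cos_rpow_mul_hyp2F1term k ν _ _ hw
  rw [hφ.iteratedDeriv_eq, hφ.eq_of_nhds]
  exact neg_iteratedDeriv_two_add_tan_sq_mul_hyp2F1OddSeries (by linarith) k hcos
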